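/- Decomposition of the CME into the MAP-VAE estimator plus error terms: with T(z) = C(z)(C(z) + ς²I)⁻¹, Γ = C(μ_φ) + ς²I, Ψ = C(z) − C(μ_φ), ψ = f₁(z) − f₁(μ_φ), one has E_z[f₁(z) + T(z)(y − f₁(z))] = f₁(μ_φ) + Γ⁻¹C(μ_φ)(y − f₁(μ_φ)) + E_z[(I − Γ⁻¹C(μ_φ))ψ] + E_z[Γ⁻¹Ψ(I − (Γ+Ψ)⁻¹C(z))(y − f₁(z))]. -/

import Mathlib

/-! Since `ς²I` commutes with `C(z)`, so does `(C(z) + ς²I)⁻¹`, and multiplying the claimed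
splitting `T(z) = Γ⁻¹C(μ_φ) + Γ⁻¹Ψ(I − (Γ+Ψ)⁻¹C(z))` on the left by `Γ = (Γ + Ψ) − Ψ` turns it
into a triviality. Applied to `y − f₁(z)` and rebased at `f₁(μ_φ)`, this splits the integrand
into a constant, the `ψ` term and the `Ψ` term; integrate term by term against the
probability measure. -/

open Matrix ComplexOrder MeasureTheory

namespace Matrix

variable {n : Type*} [Fintype n] [DecidableEq n]

theorem PosSemidef.isUnit_det_add_smul_one {K : Type*} [Field K] [PartialOrder K] [StarRing K]
    [StarOrderedRing K] {A : Matrix n n K} (hA : A.PosSemidef) {c : K} (hc : 0 < c) :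
    IsUnit (A + c • 1).det :=
  (isUnit_iff_isUnit_det _).mp (PosDef.posSemidef_add hA (PosDef.one.smul hc)).isUnit

variable {R : Type*} [CommRing R]

theorem mul_inv_add_eq_inv_mul_add (A₀ A D : Matrix n n R) (h₀ : IsUnit (A₀ + D).det)
    (h : IsUnit (A + D).det) (hD : Commute A D) :
    A * (A + D)⁻¹ = (A₀ + D)⁻¹ * A₀ + (A₀ + D)⁻¹ * (A - A₀) * (1 - (A₀ + D + (A - A₀))⁻¹ * A) := by
  set Γ := A₀ + D
  set S := A + D
  set X := A * S⁻¹
  have hΓS : Γ + (A - A₀) = S := by simp only [Γ, S]; abel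
  have hSX : S * X = A := by
    rw [← Matrix.mul_assoc, ((Commute.refl A).add_right hD).symm.eq, Matrix.mul_assoc,
      mul_nonsing_inv _ h, Matrix.mul_one]
  have hXS : S⁻¹ * A = X := by rw [← hSX, nonsing_inv_mul_cancel_left _ _ h]
  have hΓX : Γ * X = A₀ + (A - A₀) * (1 - X) := by
    rw [eq_sub_of_add_eq hΓS, Matrix.sub_mul, hSX, Matrix.mul_sub, Matrix.mul_one]
    abel
  calc X = Γ⁻¹ * (Γ * X) := (nonsing_inv_mul_cancel_left _ _ h₀).symm
    _ = _ := by rw [hΓX, Matrix.mul_add, Matrix.mul_assoc, hΓS, hXS]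

theorem add_mulVec_sub_eq (M E : Matrix n n R) (a b y : n → R) :
    a + (M + E) *ᵥ (y - a) = (b + M *ᵥ (y - b)) + (1 - M) *ᵥ (a - b) + E *ᵥ (y - a) := by
  simp only [add_mulVec, sub_mulVec, one_mulVec, mulVec_sub]
  abel

end Matrix

theorem MeasureTheory.integral_const_add_add {α E : Type*} [MeasurableSpace α]
    [NormedAddCommGroup E] [NormedSpace ℝ E] [CompleteSpace E] {μ : Measure α}
    [IsProbabilityMeasure μ]
    (c : E) {f g : α → E} (hf : Integrable f μ) (hg : Integrable g μ) :
    ∫ x, c + f x + g x ∂μ = c + ∫ x, f x ∂μ + ∫ x, g x ∂μ := by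
  rw [integral_add (f := fun x => c + f x) ((integrable_const c).add hf) hg,
    integral_add (integrable_const c) hf, integral_const, probReal_univ, one_smul]

theorem cme_map_vae_decomposition_general {N NL : ℕ}
    (ρ : Measure (Fin NL → ℝ)) [IsProbabilityMeasure ρ]
    (f1 : (Fin NL → ℝ) → (Fin N → ℂ))
    (C : (Fin NL → ℝ) → Matrix (Fin N) (Fin N) ℂ)
    (hC : ∀ v, (C v).PosSemidef)
    (ς2 : ℝ) (hς2 : 0 < ς2) (μφ : Fin NL → ℝ) (y : Fin N → ℂ)
    (T : (Fin NL → ℝ) → Matrix (Fin N) (Fin N) ℂ)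
    (hT : T = fun v => C v * (C v + (ς2 : ℂ) • (1 : Matrix (Fin N) (Fin N) ℂ))⁻¹)
    (Γ : Matrix (Fin N) (Fin N) ℂ)
    (hΓ : Γ = C μφ + (ς2 : ℂ) • (1 : Matrix (Fin N) (Fin N) ℂ))
    (Ψ : (Fin NL → ℝ) → Matrix (Fin N) (Fin N) ℂ) (hΨ : Ψ = fun v => C v - C μφ)
    (ψ : (Fin NL → ℝ) → (Fin N → ℂ)) (hψ : ψ = fun v => f1 v - f1 μφ)
    (hint2 : Integrable (fun v => ((1 : Matrix (Fin N) (Fin N) ℂ) - Γ⁻¹ * C μφ) *ᵥ ψ v) ρ)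
    (hint3 : Integrable (fun v =>
      (Γ⁻¹ * Ψ v * ((1 : Matrix (Fin N) (Fin N) ℂ) - (Γ + Ψ v)⁻¹ * C v)) *ᵥ (y - f1 v)) ρ) :
    ∫ v, (f1 v + (T v) *ᵥ (y - f1 v)) ∂ρ
      = (f1 μφ + (Γ⁻¹ * C μφ) *ᵥ (y - f1 μφ))
        + ∫ v, ((1 : Matrix (Fin N) (Fin N) ℂ) - Γ⁻¹ * C μφ) *ᵥ ψ v ∂ρ
        + ∫ v, (Γ⁻¹ * Ψ v * ((1 : Matrix (Fin N) (Fin N) ℂ) - (Γ + Ψ v)⁻¹ * C v))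
            *ᵥ (y - f1 v) ∂ρ := by
  subst hT hΓ hΨ hψ
  have hunit : ∀ v, IsUnit (C v + (ς2 : ℂ) • 1).det := fun v =>
    (hC v).isUnit_det_add_smul_one (Complex.zero_lt_real.mpr hς2)
  have hsplit : ∀ v, C v * (C v + (ς2 : ℂ) • 1)⁻¹ = _ := fun v =>
    mul_inv_add_eq_inv_mul_add (C μφ) (C v) _ (hunit μφ) (hunit v)
      ((Commute.one_right _).smul_right _)
  simp_rw [hsplit, add_mulVec_sub_eq _ _ (f1 _) (f1 μφ) y]
  exact integral_const_add_add _ hint2 hint3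

/-- Decomposition of the CME into the MAP-VAE estimator plus error terms: with
`T(z) = C(z)(C(z) + ς²I)⁻¹`, `Γ = C(μ_φ) + ς²I`, `Ψ(z) = C(z) − C(μ_φ)`,
`ψ(z) = f₁(z) − f₁(μ_φ)`, one has
`E_z[f₁(z) + T(z)(y − f₁(z))] = f₁(μ_φ) + Γ⁻¹C(μ_φ)(y − f₁(μ_φ))
  + E_z[(I − Γ⁻¹C(μ_φ))ψ] + E_z[Γ⁻¹Ψ(I − (Γ+Ψ)⁻¹C(z))(y − f₁(z))]`. -/
theorem cme_map_vae_decomposition {N NL : ℕ}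
    (ρ : Measure (Fin NL → ℝ)) [IsProbabilityMeasure ρ]
    (f1 : (Fin NL → ℝ) → (Fin N → ℂ))
    (C : (Fin NL → ℝ) → Matrix (Fin N) (Fin N) ℂ)
    (hC : ∀ v, (C v).PosSemidef)
    (ς2 : ℝ) (hς2 : 0 < ς2) (μφ : Fin NL → ℝ) (y : Fin N → ℂ)
    (T : (Fin NL → ℝ) → Matrix (Fin N) (Fin N) ℂ)
    (hT : T = fun v => C v * (C v + (ς2 : ℂ) • (1 : Matrix (Fin N) (Fin N) ℂ))⁻¹)
    (Γ : Matrix (Fin N) (Fin N) ℂ)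
    (hΓ : Γ = C μφ + (ς2 : ℂ) • (1 : Matrix (Fin N) (Fin N) ℂ))
    (Ψ : (Fin NL → ℝ) → Matrix (Fin N) (Fin N) ℂ) (hΨ : Ψ = fun v => C v - C μφ)
    (ψ : (Fin NL → ℝ) → (Fin N → ℂ)) (hψ : ψ = fun v => f1 v - f1 μφ)
    (hint1 : Integrable (fun v => f1 v + (T v) *ᵥ (y - f1 v)) ρ)
    (hint2 : Integrable (fun v => ((1 : Matrix (Fin N) (Fin N) ℂ) - Γ⁻¹ * C μφ) *ᵥ ψ v) ρ)
    (hint3 : Integrable (fun v =>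
      (Γ⁻¹ * Ψ v * ((1 : Matrix (Fin N) (Fin N) ℂ) - (Γ + Ψ v)⁻¹ * C v)) *ᵥ (y - f1 v)) ρ) :
    ∫ v, (f1 v + (T v) *ᵥ (y - f1 v)) ∂ρ
      = (f1 μφ + (Γ⁻¹ * C μφ) *ᵥ (y - f1 μφ))
        + ∫ v, ((1 : Matrix (Fin N) (Fin N) ℂ) - Γ⁻¹ * C μφ) *ᵥ ψ v ∂ρ
        + ∫ v, (Γ⁻¹ * Ψ v * ((1 : Matrix (Fin N) (Fin N) ℂ) - (Γ + Ψ v)⁻¹ * C v))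
            *ᵥ (y - f1 v) ∂ρ :=
  cme_map_vae_decomposition_general ρ f1 C hC ς2 hς2 μφ y T hT Γ hΓ Ψ hΨ ψ hψ hint2 hint3
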